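/- arXiv:1603.04018 — 6 statements merged into one kernel-verified Lean document; each statement's English description precedes it below -/
import Mathlib

section
/- Let G be a finite group with a unique minimal normal subgroup N, where N = N₁ × ⋯ × N_t is a direct product of isomorphic non-abelian simple groups Nᵢ. If H is a subgroup of G containing N such that every non-abelian chief factor of H is simple, then each Nᵢ is normal in H. -/
/-- `N` is a minimal normal subgroup of `G`. -/
def IsMinimalNormal {G : Type*} [Group G] (N : Subgroup G) : Prop :=
  N.Normal ∧ N ≠ ⊥ ∧ ∀ M : Subgroup G, M.Normal → M ≤ N → M = ⊥ ∨ M = N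

/-- Every non-abelian chief factor of `G` is simple. -/
def SCGroup (G : Type*) [Group G] : Prop :=
  ∀ (U V : Subgroup G) [U.Normal] [V.Normal], V < U →
    IsMinimalNormal (U.map (QuotientGroup.mk' V)) →
    (¬ ∀ x y : (U.map (QuotientGroup.mk' V)), x * y = y * x) →
    IsSimpleGroup (U.map (QuotientGroup.mk' V))

section Helpers

variable {A B : Type*} [Group A] [Group B]

lemma nonabelian_of_mulEquiv (e : A ≃* B) (h : ¬ ∀ x y : A, x * y = y * x) :
    ¬ ∀ x y : B, x * y = y * x := by
  intro hab
  apply h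
  intro x y
  have := hab (e x) (e y)
  rw [← map_mul, ← map_mul] at this
  exact e.injective this

lemma isSimpleGroup_of_mulEquiv (e : A ≃* B) (h : IsSimpleGroup A) : IsSimpleGroup B := by
  haveI := h
  haveI : Nontrivial B := e.symm.toEquiv.nontrivial
  exact IsSimpleGroup.isSimpleGroup_of_surjective e.toMonoidHom e.surjective

lemma map_isMinimalNormal (f : A →* B) (hinj : Function.Injective f)
    (hsurj : Function.Surjective f) {M : Subgroup A} (hM : IsMinimalNormal M) :
    IsMinimalNormal (M.map f) := by
  obtain ⟨hnorm, hbot, hmin⟩ := hM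
  refine ⟨hnorm.map f hsurj, ?_, ?_⟩
  · intro hb
    exact hbot ((Subgroup.map_eq_bot_iff_of_injective M hinj).mp hb)
  · intro M' hM'norm hle
    have hcle : M'.comap f ≤ M := by
      rw [← Subgroup.comap_map_eq_self_of_injective hinj M]
      exact Subgroup.comap_mono hle
    have hMM' : M' = (M'.comap f).map f :=
      (Subgroup.map_comap_eq_self_of_surjective hsurj M').symm
    rcases hmin (M'.comap f) (hM'norm.comap f) hcle with h | h
    · left; rw [hMM', h, Subgroup.map_bot]
    · right; rw [hMM', h]

end Helpers

/-- If a finite group `G` has a unique minimal normal subgroup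
`N = N₁ × ⋯ × N_t`, an internal direct product of isomorphic non-abelian simple
subgroups, and `H` is a subgroup containing `N` all of whose non-abelian chief
factors are simple, then each `Nᵢ` is normal in `H`. -/
theorem stmt0 {G : Type} [Group G] [Finite G]
    (N : Subgroup G) (hmin : IsMinimalNormal N)
    (huniq : ∀ M : Subgroup G, IsMinimalNormal M → M = N)
    (ι : Type) [Fintype ι] [Nonempty ι] (Nfam : ι → Subgroup G)
    (hsimple : ∀ i, IsSimpleGroup (Nfam i))
    (hnonab : ∀ i, ¬ ∀ x y : (Nfam i), x * y = y * x)
    (hiso : ∀ i j, Nonempty ((Nfam i) ≃* (Nfam j)))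
    (hindep : iSupIndep Nfam)
    (hsup : (⨆ i, Nfam i) = N)
    (hcomm : ∀ i j, i ≠ j → ∀ x ∈ Nfam i, ∀ y ∈ Nfam j, x * y = y * x)
    (H : Subgroup G) (hNH : N ≤ H) (hSC : SCGroup H) :
    ∀ i, ((Nfam i).subgroupOf H).Normal := by
  classical
  obtain ⟨hNnorm, -, -⟩ := hmin
  -- each `Nfam j` is nontrivial
  have hnontriv : ∀ j, ∃ x ∈ Nfam j, x ≠ 1 := by
    intro j
    by_contra hc
    push_neg at hc
    apply hnonab j
    intro x y
    have hx : (x : G) = 1 := hc x x.2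
    have hy : (y : G) = 1 := hc y y.2
    apply Subtype.ext
    push_cast [hx, hy]
    simp
  have hle : ∀ j, Nfam j ≤ N := fun j => hsup ▸ le_iSup Nfam j
  -- `N` normalizes each `Nfam j`
  have aux1 : ∀ j, ∀ n ∈ N, ∀ x ∈ Nfam j, n * x * n⁻¹ ∈ Nfam j := by
    intro j n hn
    rw [← hsup] at hn
    refine Subgroup.iSup_induction Nfam
      (C := fun n => ∀ x ∈ Nfam j, n * x * n⁻¹ ∈ Nfam j) hn ?_ ?_ ?_
    · intro s m hm x hx
      by_cases hsj : s = j
      · subst hsj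
        exact mul_mem (mul_mem hm hx) (inv_mem hm)
      · have hxm : m * x = x * m := hcomm s j hsj m hm x hx
        have : m * x * m⁻¹ = x := by rw [hxm, mul_inv_cancel_right]
        rw [this]; exact hx
    · intro x hx; simpa using hx
    · intro a b ha hb x hx
      have h2 : a * b * x * (a * b)⁻¹ = a * (b * x * b⁻¹) * a⁻¹ := by group
      rw [h2]
      exact ha _ (hb x hx)
  -- the internal direct product homomorphism
  have hcomm' : Pairwise fun s t : ι => ∀ x y : G, x ∈ Nfam s → y ∈ Nfam t → Commute x y :=
    fun s t hst x y hx hy => hcomm s t hst x hx y hy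
  set φ := Subgroup.noncommPiCoprod hcomm' with hφdef
  have hφrange : φ.range = N := by
    rw [hφdef, Subgroup.noncommPiCoprod_range, hsup]
  -- Key lemma: a nontrivial subgroup of `N` normalized by `N` contains some `Nfam j`.
  have lemA : ∀ P : Subgroup G, P ≤ N → (∀ n ∈ N, ∀ p ∈ P, n * p * n⁻¹ ∈ P) → P ≠ ⊥ →
      ∃ j, Nfam j ≤ P := by
    intro P hPN hPnorm hPbot
    obtain ⟨k, hkP, hk1⟩ : ∃ k ∈ P, k ≠ 1 := by
      by_contra hc
      push_neg at hc
      exact hPbot ((Subgroup.eq_bot_iff_forall P).mpr hc)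
    obtain ⟨f, hf⟩ : ∃ f, φ f = k := by
      have : k ∈ φ.range := by rw [hφrange]; exact hPN hkP
      exact this
    obtain ⟨j, hfj⟩ : ∃ j, (f j : G) ≠ 1 := by
      by_contra hc
      push_neg at hc
      apply hk1
      have hone : f = 1 := funext fun s => Subtype.ext (hc s)
      rw [← hf, hone, map_one]
    -- find a noncommuting element in `Nfam j`
    haveI := hsimple j
    obtain ⟨x, hxnc⟩ : ∃ x : Nfam j, (x : G) * (f j : G) ≠ (f j : G) * (x : G) := by
      by_contra hc
      push_neg at hc
      rcases Subgroup.Normal.eq_bot_or_eq_top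
          (Subgroup.normal_of_characteristic (H := Subgroup.center (Nfam j))) with h | h
      · have hmem : f j ∈ Subgroup.center (Nfam j) := by
          rw [Subgroup.mem_center_iff]
          intro g
          apply Subtype.ext
          push_cast
          exact hc g
        rw [h, Subgroup.mem_bot] at hmem
        exact hfj (by rw [hmem]; rfl)
      · apply hnonab j
        intro a b
        have hbmem : b ∈ Subgroup.center (Nfam j) := by rw [h]; trivial
        rw [Subgroup.mem_center_iff] at hbmem
        exact hbmem a
    -- decompose k = (f j) * m with m commuting with Nfam j
    set m := φ (Function.update f j 1) with hm
    have hmcomm : ∀ z : G, z ∈ Nfam j → Commute z m := by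
      intro z hz
      rw [hm, hφdef, Subgroup.noncommPiCoprod_apply]
      apply Finset.noncommProd_commute
      intro s _
      by_cases hs : s = j
      · subst hs
        rw [Function.update_self]
        simp
      · exact hcomm j s (fun he => hs he.symm) z hz _ (Function.update f j 1 s).2
    have hkdecomp : k = (f j : G) * m := by
      have hfun : f = Pi.mulSingle j (f j) * Function.update f j 1 := by
        funext s
        by_cases hs : s = j
        · subst hs; simp
        · simp [hs, Function.update_of_ne hs, Pi.mulSingle_eq_of_ne hs]
      rw [← hf, hfun, map_mul, hm, hφdef, Subgroup.noncommPiCoprod_mulSingle]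
      simp
    set xg : G := (x : G) with hxg
    have hcval : xg * k * xg⁻¹ * k⁻¹ = xg * (f j : G) * xg⁻¹ * (f j : G)⁻¹ := by
      have e1 : xg⁻¹ * m = m * xg⁻¹ := ((hmcomm xg x.2).inv_left).eq
      calc xg * k * xg⁻¹ * k⁻¹
          = xg * (f j : G) * (m * xg⁻¹) * (m⁻¹ * (f j : G)⁻¹) := by rw [hkdecomp]; group
        _ = xg * (f j : G) * (xg⁻¹ * m) * (m⁻¹ * (f j : G)⁻¹) := by rw [e1]
        _ = xg * (f j : G) * xg⁻¹ * (f j : G)⁻¹ := by group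
    set c : G := xg * (f j : G) * xg⁻¹ * (f j : G)⁻¹ with hc
    have hcP : c ∈ P := by
      rw [← hcval]
      exact mul_mem (hPnorm xg (hle j x.2) k hkP) (inv_mem hkP)
    have hcNj : c ∈ Nfam j :=
      mul_mem (mul_mem (mul_mem x.2 (f j).2) (inv_mem x.2)) (inv_mem (f j).2)
    have hc1 : c ≠ 1 := by
      intro h
      apply hxnc
      have : xg * (f j : G) = (f j : G) * xg := by
        have h2 : xg * (f j : G) * xg⁻¹ * (f j : G)⁻¹ = 1 := h
        calc xg * (f j : G) = (xg * (f j : G) * xg⁻¹ * (f j : G)⁻¹) * ((f j : G) * xg) := by group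
          _ = (f j : G) * xg := by rw [h2]; group
      exact this
    set Q := P.subgroupOf (Nfam j) with hQ
    have hQnorm : Q.Normal := by
      constructor
      intro q hq g
      rw [hQ, Subgroup.mem_subgroupOf] at hq ⊢
      have hval : ((g * q * g⁻¹ : Nfam j) : G) = (g : G) * (q : G) * (g : G)⁻¹ := by push_cast; rfl
      rw [hval]
      exact hPnorm (g : G) (hle j g.2) (q : G) hq
    have hQbot : Q ≠ ⊥ := by
      intro hb
      have hmem : (⟨c, hcNj⟩ : Nfam j) ∈ Q := by
        rw [hQ, Subgroup.mem_subgroupOf]; exact hcP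
      rw [hb, Subgroup.mem_bot] at hmem
      exact hc1 (by simpa [Subtype.ext_iff] using hmem)
    rcases hQnorm.eq_bot_or_eq_top with h | h
    · exact absurd h hQbot
    · exact ⟨j, Subgroup.subgroupOf_eq_top.mp h⟩
  -- now the main argument
  intro i
  obtain ⟨x₀, hx₀, hx₀1⟩ := hnontriv i
  set K : Subgroup G := ⨆ h : H, (Nfam i).map (MulAut.conj (h : G)).toMonoidHom with hK
  have hgen : ∀ h : H, (Nfam i).map (MulAut.conj (h : G)).toMonoidHom ≤ K := by
    intro h
    rw [hK]
    exact le_iSup (fun h : H => (Nfam i).map (MulAut.conj (h : G)).toMonoidHom) h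
  have hconjmem : ∀ (h : H) (x : G), x ∈ Nfam i →
      (h : G) * x * (h : G)⁻¹ ∈ (Nfam i).map (MulAut.conj (h : G)).toMonoidHom := by
    intro h x hx
    exact ⟨x, hx, rfl⟩
  have hNiK : Nfam i ≤ K := by
    intro x hx
    have h1 := hgen 1 (hconjmem 1 x hx)
    simpa using h1
  have hKN : K ≤ N := by
    rw [hK]
    apply iSup_le
    intro h
    rintro _ ⟨x, hx, rfl⟩
    simpa [MulAut.conj_apply] using hNnorm.conj_mem x (hle i hx) (h : G)
  have hKH : K ≤ H := hKN.trans hNH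
  have hKnormH : ∀ g ∈ H, ∀ k ∈ K, g * k * g⁻¹ ∈ K := by
    intro g hg k hk
    rw [hK] at hk
    refine Subgroup.iSup_induction _ (C := fun k => g * k * g⁻¹ ∈ K) hk ?_ ?_ ?_
    · rintro h _ ⟨x, hx, rfl⟩
      have hval : g * ((MulAut.conj (h : G)).toMonoidHom x) * g⁻¹
          = ((⟨g, hg⟩ * h : H) : G) * x * (((⟨g, hg⟩ * h : H) : G))⁻¹ := by
        simp only [MulAut.conj_apply, MulEquiv.toMonoidHom_eq_coe, MonoidHom.coe_coe]
        push_cast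
        group
      rw [hval]
      exact hgen _ (hconjmem _ x hx)
    · simpa using one_mem K
    · intro a b ha hb
      have h2 : g * (a * b) * g⁻¹ = (g * a * g⁻¹) * (g * b * g⁻¹) := by group
      rw [h2]
      exact mul_mem ha hb
  -- every conjugate of `Nfam i` by an element of `H` is some `Nfam j`
  have hgenNfam : ∀ h : H, ∃ j, (Nfam i).map (MulAut.conj (h : G)).toMonoidHom = Nfam j := by
    intro h
    set P := (Nfam i).map (MulAut.conj (h : G)).toMonoidHom with hP
    have hPle : P ≤ N := by
      rw [hP]
      rintro _ ⟨x, hx, rfl⟩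
      simpa [MulAut.conj_apply] using hNnorm.conj_mem x (hle i hx) (h : G)
    have hPnorm : ∀ n ∈ N, ∀ p ∈ P, n * p * n⁻¹ ∈ P := by
      intro n hn p hp
      obtain ⟨x, hx, rfl⟩ := hp
      have hn' : (h : G)⁻¹ * n * (h : G) ∈ N := by
        have := hNnorm.conj_mem n hn (h : G)⁻¹
        simpa using this
      have hx' : ((h : G)⁻¹ * n * (h : G)) * x * ((h : G)⁻¹ * n * (h : G))⁻¹ ∈ Nfam i :=
        aux1 i _ hn' x hx
      refine ⟨_, hx', ?_⟩
      simp only [MulAut.conj_apply, MulEquiv.toMonoidHom_eq_coe, MonoidHom.coe_coe]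
      group
    have hPbot : P ≠ ⊥ := by
      intro hb
      have hmem : (h : G) * x₀ * (h : G)⁻¹ ∈ P := by
        rw [hP]; exact ⟨x₀, hx₀, rfl⟩
      rw [hb, Subgroup.mem_bot] at hmem
      apply hx₀1
      calc x₀ = (h : G)⁻¹ * ((h : G) * x₀ * (h : G)⁻¹) * (h : G) := by group
        _ = 1 := by rw [hmem]; group
    obtain ⟨j, hjP⟩ := lemA P hPle hPnorm hPbot
    have hnormQ : ((Nfam j).subgroupOf P).Normal := by
      constructor
      intro q hq g
      rw [Subgroup.mem_subgroupOf] at hq ⊢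
      have hval : ((g * q * g⁻¹ : P) : G) = (g : G) * (q : G) * (g : G)⁻¹ := by push_cast; rfl
      rw [hval]
      exact aux1 j (g : G) (hPle g.2) (q : G) hq
    have hQbot : (Nfam j).subgroupOf P ≠ ⊥ := by
      obtain ⟨y, hy, hy1⟩ := hnontriv j
      intro hb
      have hmem : (⟨y, hjP hy⟩ : P) ∈ (Nfam j).subgroupOf P := by
        rw [Subgroup.mem_subgroupOf]; exact hy
      rw [hb, Subgroup.mem_bot] at hmem
      exact hy1 (by simpa [Subtype.ext_iff] using hmem)
    haveI hsimP : IsSimpleGroup P := by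
      rw [hP]
      exact isSimpleGroup_of_mulEquiv
        ((Nfam i).equivMapOfInjective (MulAut.conj (h : G)).toMonoidHom
          (MulAut.conj (h : G)).injective) (hsimple i)
    rcases hnormQ.eq_bot_or_eq_top with hbt | htp
    · exact absurd hbt hQbot
    · exact ⟨j, le_antisymm (Subgroup.subgroupOf_eq_top.mp htp) hjP⟩
  -- if `Nfam j ≤ K` then `Nfam j` is a conjugate of `Nfam i`
  have horbit : ∀ j, Nfam j ≤ K →
      ∃ h : H, (Nfam i).map (MulAut.conj (h : G)).toMonoidHom = Nfam j := by
    intro j hjK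
    by_contra hc
    push_neg at hc
    have hKle : K ≤ ⨆ (s) (_ : s ≠ j), Nfam s := by
      rw [hK]
      apply iSup_le
      intro h
      obtain ⟨s, hs⟩ := hgenNfam h
      rw [hs]
      have hsj : s ≠ j := by
        intro he
        exact hc h (by rw [hs, he])
      exact le_iSup₂ (f := fun s (_ : s ≠ j) => Nfam s) s hsj
    have hdisj := (iSupIndep_def.mp hindep) j
    obtain ⟨y, hy, hy1⟩ := hnontriv j
    have hmem : y ∈ Nfam j ⊓ ⨆ (s) (_ : s ≠ j), Nfam s :=
      ⟨hy, hKle (hjK hy)⟩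
    have := hdisj.le_bot hmem
    rw [Subgroup.mem_bot] at this
    exact hy1 this
  -- `U := K.subgroupOf H` and its properties
  set U : Subgroup ↥H := K.subgroupOf H with hU
  haveI hUnorm : U.Normal := by
    constructor
    intro u hu g
    rw [hU, Subgroup.mem_subgroupOf] at hu ⊢
    have hval : ((g * u * g⁻¹ : H) : G) = (g : G) * (u : G) * (g : G)⁻¹ := by push_cast; rfl
    rw [hval]
    exact hKnormH (g : G) g.2 (u : G) hu
  have hUbot : U ≠ ⊥ := by
    intro hb
    have hmem : (⟨x₀, hNH (hle i hx₀)⟩ : H) ∈ U := by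
      rw [hU, Subgroup.mem_subgroupOf]
      exact hNiK hx₀
    rw [hb, Subgroup.mem_bot] at hmem
    exact hx₀1 (by simpa [Subtype.ext_iff] using hmem)
  have hVU : (⊥ : Subgroup ↥H) < U := bot_lt_iff_ne_bot.mpr hUbot
  -- minimality of U
  have hUmin : IsMinimalNormal U := by
    refine ⟨hUnorm, hUbot, ?_⟩
    intro M' hM'norm hM'le
    by_cases hbM : M' = ⊥
    · left; exact hbM
    right
    set P' := M'.map H.subtype with hP'
    have hP'K : P' ≤ K := by
      rw [hP']
      rintro _ ⟨w, hw, rfl⟩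
      have := hM'le hw
      rw [hU, Subgroup.mem_subgroupOf] at this
      exact this
    have hP'norm : ∀ n ∈ N, ∀ p ∈ P', n * p * n⁻¹ ∈ P' := by
      intro n hn p hp
      rw [hP'] at hp
      obtain ⟨w, hw, rfl⟩ := hp
      have hg : (⟨n, hNH hn⟩ : H) * w * (⟨n, hNH hn⟩ : H)⁻¹ ∈ M' := hM'norm.conj_mem w hw _
      refine ⟨_, hg, ?_⟩
      push_cast
      rfl
    have hP'bot : P' ≠ ⊥ := by
      intro hb
      apply hbM
      rw [hP'] at hb
      rwa [Subgroup.map_eq_bot_iff_of_injective M' H.subtype_injective] at hb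
    obtain ⟨j, hjP'⟩ := lemA P' (hP'K.trans hKN) hP'norm hP'bot
    obtain ⟨h, hh⟩ := horbit j (hjP'.trans hP'K)
    have hiP' : Nfam i ≤ P' := by
      intro x hx
      have h1 : (h : G) * x * (h : G)⁻¹ ∈ Nfam j := by
        rw [← hh]; exact ⟨x, hx, rfl⟩
      obtain ⟨w, hw, hmeq⟩ := hjP' h1
      have hg : h⁻¹ * w * (h⁻¹)⁻¹ ∈ M' := hM'norm.conj_mem w hw h⁻¹
      refine ⟨_, hg, ?_⟩
      have hmeq' : (w : G) = (h : G) * x * (h : G)⁻¹ := hmeq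
      show ((h⁻¹ * w * (h⁻¹)⁻¹ : H) : G) = x
      push_cast [hmeq']
      group
    have hKP' : K ≤ P' := by
      rw [hK]
      apply iSup_le
      intro h'
      rintro _ ⟨x, hx, rfl⟩
      obtain ⟨w, hw, hmeq⟩ := hiP' hx
      have hg : h' * w * h'⁻¹ ∈ M' := hM'norm.conj_mem w hw h'
      refine ⟨_, hg, ?_⟩
      have hmeq' : (w : G) = x := hmeq
      show ((h' * w * h'⁻¹ : H) : G) = (MulAut.conj (h' : G)).toMonoidHom x
      simp only [MulAut.conj_apply, MulEquiv.toMonoidHom_eq_coe, MonoidHom.coe_coe]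
      push_cast [hmeq']
      rfl
    have hP'eq : P' = K := le_antisymm hP'K hKP'
    apply Subgroup.map_injective H.subtype_injective
    rw [← hP', hP'eq, hU, Subgroup.subgroupOf_map_subtype, inf_of_le_left hKH]
  -- transfer through the quotient by ⊥ and apply the SC hypothesis
  set f : ↥H →* ↥H ⧸ (⊥ : Subgroup ↥H) := QuotientGroup.mk' ⊥ with hfdef
  have hfinj : Function.Injective f := by
    rw [← MonoidHom.ker_eq_bot_iff]
    exact QuotientGroup.ker_mk' ⊥
  have hfsurj : Function.Surjective f := QuotientGroup.mk'_surjective ⊥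
  have hminmap := map_isMinimalNormal f hfinj hfsurj hUmin
  have hnonabU : ¬ ∀ x y : U, x * y = y * x := by
    have hnai := hnonab i
    intro hab
    apply hnai
    intro a b
    have ha : ((a : G)) ∈ K := hNiK a.2
    have hb : ((b : G)) ∈ K := hNiK b.2
    set aU : U := ⟨⟨(a : G), hKH ha⟩, by rw [hU, Subgroup.mem_subgroupOf]; exact ha⟩
    set bU : U := ⟨⟨(b : G), hKH hb⟩, by rw [hU, Subgroup.mem_subgroupOf]; exact hb⟩
    have heq := hab aU bU
    have hG : (a : G) * b = (b : G) * a := by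
      have h2 := congrArg (fun z : U => ((z : ↥H) : G)) heq
      simpa using h2
    apply Subtype.ext
    push_cast
    exact hG
  have hnonabMap : ¬ ∀ x y : (U.map f), x * y = y * x :=
    nonabelian_of_mulEquiv (U.equivMapOfInjective f hfinj) hnonabU
  have hsimpleMap : IsSimpleGroup (U.map f) := hSC U ⊥ hVU hminmap hnonabMap
  have hsimpleU : IsSimpleGroup U :=
    isSimpleGroup_of_mulEquiv (U.equivMapOfInjective f hfinj).symm hsimpleMap
  have hsimpleK : IsSimpleGroup K :=
    isSimpleGroup_of_mulEquiv (Subgroup.subgroupOfEquivOfLe hKH) hsimpleU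
  -- K = Nfam i
  have hnormNiK : ((Nfam i).subgroupOf K).Normal := by
    constructor
    intro q hq g
    rw [Subgroup.mem_subgroupOf] at hq ⊢
    have hval : ((g * q * g⁻¹ : K) : G) = (g : G) * (q : G) * (g : G)⁻¹ := by push_cast; rfl
    rw [hval]
    exact aux1 i (g : G) (hKN g.2) (q : G) hq
  have hNiKbot : (Nfam i).subgroupOf K ≠ ⊥ := by
    intro hb
    have hmem : (⟨x₀, hNiK hx₀⟩ : K) ∈ (Nfam i).subgroupOf K := by
      rw [Subgroup.mem_subgroupOf]; exact hx₀
    rw [hb, Subgroup.mem_bot] at hmem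
    exact hx₀1 (by simpa [Subtype.ext_iff] using hmem)
  have hKNi : K = Nfam i := by
    rcases hnormNiK.eq_bot_or_eq_top with hbt | htp
    · exact absurd hbt hNiKbot
    · exact le_antisymm (Subgroup.subgroupOf_eq_top.mp htp) hNiK
  rw [← hKNi]
  exact hUnorm
end

section
/- Let G be a finite group and let N be a subnormal subgroup of G that is simple and non-abelian. If H is a subgroup of G with N ⊆ H and every non-abelian chief factor of H is simple, then the normal closure of N in H is a minimal normal subgroup of H equal to N; in particular N is normal in H. -/
/-- `N` is subnormal in `G`: there is a chain `N = N₀ ⊴ N₁ ⊴ ⋯ ⊴ N_k = G`. -/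
def IsSubnormal {G : Type*} [Group G] (N : Subgroup G) : Prop :=
  ∃ (n : ℕ) (c : Fin (n + 1) → Subgroup G), c 0 = N ∧ c (Fin.last n) = ⊤ ∧
    ∀ i : Fin n, c i.castSucc ≤ c i.succ ∧ ((c i.castSucc).subgroupOf (c i.succ)).Normal

/-!
Work inside `H`. Let `K` be the normal closure of `N` and `V` a maximal normal subgroup properly
below `K`. Then `K/V` is a chief factor; it is non-abelian because the perfect group `N` does not
lie in `V`, hence simple, so the image of the subnormal subgroup `N` is all of `K/V`: `K = NV`.
A perfect subnormal subgroup meeting a normal subgroup `V` trivially centralizes it: the iterated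
commutators `[V, N, …, N]` eventually lie in `N ⊓ V = ⊥`, and the three subgroups lemma removes
the copies of `N` one at a time. This applies to every conjugate `N^g ≤ K = NV`, and then
`N^g = [N^g, N^g] ≤ [N, N] = N`.
-/

variable {G : Type*} [Group G]

theorem IsSubnormal.isSubnormal {N : Subgroup G} (h : IsSubnormal N) : N.IsSubnormal := by
  obtain ⟨n, c, hc0, hcn, hc⟩ := h
  have hchain : ∀ i, (c i).IsSubnormal :=
    Fin.reverseInduction (hcn ▸ .top) fun i hi => .step _ _ (hc i).1 hi (hc i).2
  exact hc0 ▸ hchain 0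

theorem IsSimpleGroup.isPerfect [IsSimpleGroup G] (h : ¬ ∀ x y : G, x * y = y * x) :
    Group.IsPerfect G := by
  refine ⟨(Subgroup.commutator_normal ⊤ ⊤).eq_bot_or_eq_top.resolve_left
    fun hbot => h fun x y => ?_⟩
  have := Subgroup.commutator_mem_commutator (Subgroup.mem_top x) (Subgroup.mem_top y)
  rwa [hbot, Subgroup.mem_bot, commutatorElement_eq_one_iff_mul_comm] at this

namespace Subgroup

open scoped Pointwise commutatorElement

theorem IsSubnormal.exists_iterate_commutator_le {H : Subgroup G} (hH : H.IsSubnormal) :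
    ∃ n, (fun X => ⁅X, H⁆)^[n] ⊤ ≤ H := by
  induction hH with
  | top => exact ⟨0, le_rfl⟩
  | step H K hHK _ hHnK ih =>
    obtain ⟨n, hn⟩ := ih
    refine ⟨n + 1, ?_⟩
    have hle : (fun X => ⁅X, H⁆)^[n] ⊤ ≤ K :=
      (Monotone.iterate_le_of_le (fun _ _ h => commutator_mono h le_rfl)
        (fun X => commutator_mono le_rfl hHK) n ⊤).trans hn
    rw [Function.iterate_succ_apply']
    refine (commutator_mono hle le_rfl).trans ?_
    rw [commutator_le]
    intro k hk h hh
    rw [normal_subgroupOf_iff hHK] at hHnK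
    rw [commutatorElement_def]
    exact H.mul_mem (hHnK h k hh hk) (H.inv_mem hh)

theorem commutator_eq_bot_of_commutator_commutator_eq_bot {X N : Subgroup G} (hN : ⁅N, N⁆ = N)
    (h : ⁅⁅X, N⁆, N⁆ = ⊥) : ⁅X, N⁆ = ⊥ := by
  have h' : ⁅⁅N, X⁆, N⁆ = ⊥ := by rwa [commutator_comm N X]
  rw [commutator_comm, ← hN]
  exact commutator_commutator_eq_bot_of_rotate h' h

theorem commutator_eq_bot_of_iterate_eq_bot {N : Subgroup G} (hN : ⁅N, N⁆ = N) {n : ℕ} :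
    ∀ {X : Subgroup G}, (fun X => ⁅X, N⁆)^[n + 1] X = ⊥ → ⁅X, N⁆ = ⊥ := by
  induction n with
  | zero => exact id
  | succ n ih =>
    intro X h
    rw [Function.iterate_succ_apply] at h
    exact commutator_eq_bot_of_commutator_commutator_eq_bot hN (ih h)

theorem IsSubnormal.commutator_eq_bot_of_inf_eq_bot {N M : Subgroup G} (hN : N.IsSubnormal)
    (hperf : ⁅N, N⁆ = N) [M.Normal] (hNM : N ⊓ M = ⊥) : ⁅M, N⁆ = ⊥ := by
  obtain ⟨n, hn⟩ := hN.exists_iterate_commutator_le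
  have hmono : Monotone (fun X => ⁅X, N⁆) := fun _ _ h => commutator_mono h le_rfl
  have hM : ∀ k, (fun X => ⁅X, N⁆)^[k] M ≤ M := by
    intro k
    induction k with
    | zero => exact le_rfl
    | succ k ih =>
      rw [Function.iterate_succ_apply']
      exact (hmono ih).trans (commutator_le_left M N)
  have hbot : (fun X => ⁅X, N⁆)^[n] M = ⊥ :=
    le_bot_iff.mp (hNM ▸ le_inf ((hmono.iterate n le_top).trans hn) (hM n))
  refine commutator_eq_bot_of_iterate_eq_bot hperf (n := n) ?_
  rw [Function.iterate_succ_apply', hbot, commutator_bot_left]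

theorem inf_eq_bot_of_not_le {N V : Subgroup G} [IsSimpleGroup N] [hV : V.Normal]
    (hNV : ¬ N ≤ V) : N ⊓ V = ⊥ := by
  rcases (hV.subgroupOf N).eq_bot_or_eq_top with h | h
  · exact disjoint_iff.mp (subgroupOf_eq_bot.mp h).symm
  · exact absurd (subgroupOf_eq_top.mp h) hNV

theorem commutator_le_commutator_of_le_sup {A N V : Subgroup G} [V.Normal] (hA : A ≤ N ⊔ V)
    (hVA : ⁅V, A⁆ = ⊥) (hVN : ⁅V, N⁆ = ⊥) : ⁅A, A⁆ ≤ ⁅N, N⁆ := by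
  rw [commutator_eq_bot_iff_le_centralizer] at hVA hVN
  rw [commutator_le]
  intro x hx y hy
  obtain ⟨n, hn, v, hv, rfl⟩ := mem_sup_of_normal_right.mp (hA hx)
  obtain ⟨m, hm, w, hw, rfl⟩ := mem_sup_of_normal_right.mp (hA hy)
  have hvy : Commute v (m * w) := (mem_centralizer_iff.mp (hVA hv) _ hy).symm
  have hwn : Commute w n⁻¹ := (mem_centralizer_iff.mp (hVN hw) _ (N.inv_mem hn)).symm
  have : ⁅n * v, m * w⁆ = ⁅n, m⁆ :=
    calc ⁅n * v, m * w⁆ = n * (v * (m * w) * v⁻¹) * n⁻¹ * (m * w)⁻¹ := by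
          rw [commutatorElement_def]; group
      _ = n * m * (w * n⁻¹ * w⁻¹) * m⁻¹ := by rw [hvy.mul_inv_cancel]; group
      _ = ⁅n, m⁆ := by rw [hwn.mul_inv_cancel, commutatorElement_def]
  exact this ▸ commutator_mem_commutator hn hm

theorem smul_commutator {α : Type*} [Monoid α] [MulDistribMulAction α G] (a : α)
    (H₁ H₂ : Subgroup G) : a • ⁅H₁, H₂⁆ = ⁅a • H₁, a • H₂⁆ :=
  map_commutator H₁ H₂ (MulDistribMulAction.toMonoidEnd α G a : G →* G)

section ChiefFactor

variable {K V : Subgroup G} [V.Normal]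

theorem isMinimalNormal_map_mk' [hK : K.Normal] (hVK : V < K)
    (hmax : ∀ W : Subgroup G, W.Normal → V ≤ W → W < K → W ≤ V) :
    IsMinimalNormal (K.map (QuotientGroup.mk' V)) := by
  have hπ := QuotientGroup.mk'_surjective V
  refine ⟨hK.map _ hπ, ?_, fun M hM hMK => ?_⟩
  · rw [Ne, map_eq_bot_iff, QuotientGroup.ker_mk']
    exact hVK.not_ge
  have hVW : V ≤ M.comap (QuotientGroup.mk' V) :=
    (QuotientGroup.ker_mk' V).ge.trans (ker_le_comap _ _)
  have hWK : M.comap (QuotientGroup.mk' V) ≤ K := by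
    simpa [comap_map_eq, sup_eq_left.mpr hVK.le] using comap_mono (f := QuotientGroup.mk' V) hMK
  rw [← map_comap_eq_self_of_surjective hπ M]
  rcases hWK.lt_or_eq with hlt | heq
  · left
    rw [map_eq_bot_iff, QuotientGroup.ker_mk']
    exact hmax _ (hM.comap _) hVW hlt
  · exact Or.inr (heq ▸ rfl)

theorem not_forall_mul_comm_map_mk' {N : Subgroup G} (hN : ⁅N, N⁆ = N) (hNK : N ≤ K)
    (hNV : ¬ N ≤ V) : ¬ ∀ x y : K.map (QuotientGroup.mk' V), x * y = y * x := by
  intro hcomm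
  have hKab : ⁅K.map (QuotientGroup.mk' V), K.map (QuotientGroup.mk' V)⁆ = ⊥ :=
    commutator_self_eq_bot_iff.mpr ⟨⟨hcomm⟩⟩
  have hNbot : N.map (QuotientGroup.mk' V) = ⊥ := by
    rw [← hN, map_commutator, ← le_bot_iff, ← hKab]
    exact commutator_mono (map_mono hNK) (map_mono hNK)
  rw [map_eq_bot_iff, QuotientGroup.ker_mk'] at hNbot
  exact hNV hNbot

theorem IsSubnormal.sup_eq_of_isSimpleGroup_map {N : Subgroup G} (hN : N.IsSubnormal)
    (hNK : N ≤ K) (hVK : V ≤ K) (hNV : ¬ N ≤ V)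
    [hsimple : IsSimpleGroup (K.map (QuotientGroup.mk' V))] : N ⊔ V = K := by
  have hmap : N.map (QuotientGroup.mk' V) = K.map (QuotientGroup.mk' V) := by
    rcases ((hN.quotient (K := V)).subgroupOf (K := K.map _)).eq_bot_or_top_of_isSimpleGroup
      hsimple with h | h
    · refine absurd ?_ hNV
      rw [← QuotientGroup.ker_mk' V, ← map_eq_bot_iff]
      exact (subgroupOf_eq_bot.mp h).eq_bot_of_le (map_mono hNK)
    · exact le_antisymm (map_mono hNK) (subgroupOf_eq_top.mp h)
  simpa [comap_map_eq, sup_eq_left.mpr hVK] using congrArg (comap (QuotientGroup.mk' V)) hmap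

end ChiefFactor

theorem IsSubnormal.normal_of_scGroup [Finite G] (hSC : SCGroup G) {N : Subgroup G}
    (hN : N.IsSubnormal) [IsSimpleGroup N] (hperf : ⁅N, N⁆ = N) : N.Normal := by
  set K := normalClosure (N : Set G)
  have hK : K.Normal := normalClosure_normal
  have hNK : N ≤ K := le_normalClosure
  have hKbot : ⊥ < K :=
    bot_lt_iff_ne_bot.mpr (ne_bot_of_le_ne_bot ((nontrivial_iff_ne_bot N).mp inferInstance) hNK)
  obtain ⟨V, ⟨hV, hVK⟩, hVmax⟩ :=
    (Set.toFinite {W : Subgroup G | W.Normal ∧ W < K}).exists_maximal ⟨⊥, normal_bot, hKbot⟩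
  have hNV : ¬ N ≤ V := fun h => hVK.not_ge (normalClosure_le_normal h)
  have : IsSimpleGroup (K.map (QuotientGroup.mk' V)) :=
    hSC K V hVK (isMinimalNormal_map_mk' hVK fun W hW hVW hWK => hVmax ⟨hW, hWK⟩ hVW)
      (not_forall_mul_comm_map_mk' hperf hNK hNV)
  have hsup : N ⊔ V = K := hN.sup_eq_of_isSimpleGroup_map hNK hVK.le hNV
  have hperf_conj (g : ConjAct G) : ⁅g • N, g • N⁆ = g • N := by
    rw [← smul_commutator, hperf]
  have hcent (g : ConjAct G) : ⁅V, g • N⁆ = ⊥ := by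
    refine (hN.smul g).commutator_eq_bot_of_inf_eq_bot (hperf_conj g) ?_
    rw [← hV.conjAct g, ← smul_inf, inf_eq_bot_of_not_le hNV, smul_bot]
  have hconj (g : ConjAct G) : g • N ≤ N :=
    calc g • N = ⁅g • N, g • N⁆ := (hperf_conj g).symm
      _ ≤ ⁅N, N⁆ := by
        refine commutator_le_commutator_of_le_sup ?_ (hcent g) (by simpa using hcent 1)
        rw [hsup, ← hK.conjAct g]
        exact pointwise_smul_le_pointwise_smul_iff.mpr hNK
      _ = N := hperf
  refine ⟨fun n hn g => ?_⟩
  simpa [ConjAct.toConjAct_smul] using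
    hconj (ConjAct.toConjAct g) (smul_mem_pointwise_smul n _ N hn)

theorem isMinimalNormal_of_isSimpleGroup {N : Subgroup G} [hN : N.Normal] [IsSimpleGroup N] :
    IsMinimalNormal N := by
  refine ⟨hN, (nontrivial_iff_ne_bot N).mp inferInstance, fun M hM hMN => ?_⟩
  rcases (hM.subgroupOf N).eq_bot_or_eq_top with h | h
  · exact Or.inl ((subgroupOf_eq_bot.mp h).eq_bot_of_le hMN)
  · exact Or.inr (le_antisymm hMN (subgroupOf_eq_top.mp h))

end Subgroup

/-- If `N` is a subnormal non-abelian simple subgroup of a finite group `G`,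
and `H` is a subgroup with `N ≤ H` all of whose non-abelian chief factors are
simple, then the normal closure of `N` in `H` is a minimal normal subgroup of
`H` equal to `N`; in particular `N` is normal in `H`. -/
theorem stmt1 {G : Type} [Group G] [Finite G]
    (N : Subgroup G) (hsub : IsSubnormal N)
    (hsimple : IsSimpleGroup N) (hnonab : ¬ ∀ x y : N, x * y = y * x)
    (H : Subgroup G) (hNH : N ≤ H) (hSC : SCGroup H) :
    IsMinimalNormal (Subgroup.normalClosure ((N.subgroupOf H : Subgroup H) : Set H)) ∧
    Subgroup.normalClosure ((N.subgroupOf H : Subgroup H) : Set H) = N.subgroupOf H ∧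
    (N.subgroupOf H).Normal := by
  have e : N.subgroupOf H ≃* N := Subgroup.subgroupOfEquivOfLe hNH
  have : Group.IsPerfect N := IsSimpleGroup.isPerfect hnonab
  have : IsSimpleGroup (N.subgroupOf H) := e.isSimpleGroup
  have hperf : ⁅N.subgroupOf H, N.subgroupOf H⁆ = N.subgroupOf H :=
    Subgroup.isPerfect_iff.mp <|
      Group.IsPerfect.ofSurjective (f := e.symm.toMonoidHom) e.symm.surjective
  have hnormal : (N.subgroupOf H).Normal :=
    hsub.isSubnormal.subgroupOf.normal_of_scGroup hSC hperf
  rw [Subgroup.normalClosure_eq_self]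
  exact ⟨Subgroup.isMinimalNormal_of_isSimpleGroup, rfl, hnormal⟩
end

section
/- Let G be a finite group, D a normal subgroup of G with trivial center, and N₁ a minimal normal subgroup of G contained in D with N₁ non-abelian simple. If G/(N₁·C_G(N₁)) is solvable and D has no non-trivial solvable quotient (D equals its solvable residual), then D = N₁ × C_D(N₁). -/
/-- The centralizer of a normal subgroup is normal. -/
instance centralizerNormal {G : Type*} [Group G] (N : Subgroup G) [hN : N.Normal] :
    (Subgroup.centralizer (N : Set G)).Normal := by
  constructor
  intro c hc g
  rw [Subgroup.mem_centralizer_iff] at hc ⊢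
  intro n hn
  have h1 : g⁻¹ * n * g ∈ N := by
    have := hN.conj_mem n hn g⁻¹; simpa using this
  have h2 := hc _ h1
  calc n * (g * c * g⁻¹) = g * ((g⁻¹ * n * g) * c) * g⁻¹ := by group
    _ = g * (c * (g⁻¹ * n * g)) * g⁻¹ := by rw [h2]
    _ = g * c * g⁻¹ * n := by group

namespace Subgroup

variable {G : Type*} [Group G]

theorem sup_inf_assoc_of_normal_of_le {N K : Subgroup G} [N.Normal] (H : Subgroup G)
    (hNK : N ≤ K) : (N ⊔ H) ⊓ K = N ⊔ H ⊓ K :=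
  SetLike.coe_injective <| by
    rw [coe_inf, normal_mul, normal_mul, mul_inf_assoc _ _ _ hNK]

theorem inf_centralizer_eq_bot_of_center_eq_bot {N : Subgroup G} (hN : center N = ⊥) :
    N ⊓ centralizer (N : Set G) = ⊥ := by
  rw [eq_bot_iff]
  rintro x ⟨hxN, hxC⟩
  have hx : (⟨x, hxN⟩ : N) ∈ center N :=
    mem_center_iff.mpr fun y ↦ Subtype.ext (hxC y y.2)
  simpa [hN] using hx

theorem center_eq_bot_of_not_commutative {N : Type*} [Group N] [IsSimpleGroup N]
    (h : ¬ ∀ x y : N, x * y = y * x) : center N = ⊥ :=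
  (IsSimpleGroup.eq_bot_or_eq_top_of_normal _ inferInstance).resolve_right fun htop ↦
    h fun x y ↦ (mem_center_iff.mp (htop ▸ mem_top y) x)

end Subgroup

theorem MonoidHom.ker_eq_top_of_isSolvable {H Q : Type*} [Group H] [Group Q] [Group.IsSolvable Q]
    (hres : ∀ K : Subgroup H, K.Normal → (∀ [K.Normal], Group.IsSolvable (H ⧸ K)) → K = ⊤)
    (f : H →* Q) : f.ker = ⊤ :=
  hres f.ker inferInstance <|
    Group.isSolvable_of_isSolvable_injective (QuotientGroup.kerLift_injective f)

theorem Subgroup.le_of_isSolvable_quotient {G : Type*} [Group G] {D M : Subgroup G} [M.Normal]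
    [hsolv : Group.IsSolvable (G ⧸ M)]
    (hres : ∀ K : Subgroup D, K.Normal → (∀ [K.Normal], Group.IsSolvable (D ⧸ K)) → K = ⊤) :
    D ≤ M := by
  have := ((QuotientGroup.mk' M).comp D.subtype).ker_eq_top_of_isSolvable hres
  rwa [← MonoidHom.comap_ker, QuotientGroup.ker_mk', ← subgroupOf, subgroupOf_eq_top] at this

theorem stmt4_general {G : Type} [Group G]
    (D : Subgroup G)
    (N₁ : Subgroup G) [N₁.Normal] (hND : N₁ ≤ D)
    (hsimple : IsSimpleGroup N₁) (hnonab : ¬ ∀ x y : N₁, x * y = y * x)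
    (hsolv : IsSolvable (G ⧸ (N₁ ⊔ Subgroup.centralizer (N₁ : Set G))))
    (hres : ∀ (K : Subgroup D), K.Normal →
      (∀ [inst : K.Normal], IsSolvable (D ⧸ K)) → K = ⊤) :
    N₁ ⊔ (Subgroup.centralizer (N₁ : Set G) ⊓ D) = D ∧
    N₁ ⊓ (Subgroup.centralizer (N₁ : Set G) ⊓ D) = ⊥ := by
  have hDM : D ≤ N₁ ⊔ Subgroup.centralizer (N₁ : Set G) :=
    Subgroup.le_of_isSolvable_quotient (hsolv := hsolv) hres
  refine ⟨?_, ?_⟩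
  · rw [← Subgroup.sup_inf_assoc_of_normal_of_le _ hND, inf_eq_right.mpr hDM]
  · rw [← inf_assoc, Subgroup.inf_centralizer_eq_bot_of_center_eq_bot
      (Subgroup.center_eq_bot_of_not_commutative hnonab), bot_inf_eq]

/-- Let `D ⊴ G` with `Z(D) = 1` and let `N₁ ≤ D` be a minimal normal subgroup
of `G` which is non-abelian simple.  If `G/(N₁·C_G(N₁))` is solvable and `D`
has no non-trivial solvable quotient, then `D = N₁ × C_D(N₁)`. -/
theorem stmt4 {G : Type} [Group G] [Finite G]
    (D : Subgroup G) [D.Normal] (hZ : Subgroup.center D = ⊥)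
    (N₁ : Subgroup G) [N₁.Normal] (hmin : IsMinimalNormal N₁) (hND : N₁ ≤ D)
    (hsimple : IsSimpleGroup N₁) (hnonab : ¬ ∀ x y : N₁, x * y = y * x)
    (hsolv : IsSolvable (G ⧸ (N₁ ⊔ Subgroup.centralizer (N₁ : Set G))))
    (hres : ∀ (K : Subgroup D), K.Normal →
      (∀ [inst : K.Normal], IsSolvable (D ⧸ K)) → K = ⊤) :
    N₁ ⊔ (Subgroup.centralizer (N₁ : Set G) ⊓ D) = D ∧
    N₁ ⊓ (Subgroup.centralizer (N₁ : Set G) ⊓ D) = ⊥ :=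
  stmt4_general D N₁ hND hsimple hnonab hsolv hres
end

section
/- Let G be a finite group in which every non-abelian chief factor is simple (an SC-group/SNAC-group), and let D = G^𝔖 be the solvable residual with Z(D) = 1. If additionally for every minimal normal subgroup M of G contained in D the quotient G/(M·C_G(M)) is solvable, then D is a direct product of minimal normal subgroups of G, each of which is a non-abelian simple group. -/
/-- The solvable residual `G^𝔖`: the smallest normal subgroup of `G` with
solvable quotient. -/
def solvableResidual (G : Type*) [Group G] : Subgroup G :=
  sInf {K : Subgroup G | K.Normal ∧ ∀ [inst : K.Normal], IsSolvable (G ⧸ K)}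

open Subgroup

section

variable {G : Type*} [Group G]

instance solvableResidual_normal : (solvableResidual G).Normal := by
  rw [solvableResidual, sInf_eq_iInf']; exact normal_iInf_normal fun K => K.2.1

theorem solvableResidual_le {K : Subgroup G} [K.Normal] (hK : Group.IsSolvable (G ⧸ K)) :
    solvableResidual G ≤ K :=
  sInf_le ⟨inferInstance, hK⟩

theorem Subgroup.sup_inf_assoc_of_le_of_normal {M : Subgroup G} [M.Normal] (C : Subgroup G)
    {H : Subgroup G} (hMH : M ≤ H) : (M ⊔ C) ⊓ H = M ⊔ C ⊓ H :=
  SetLike.coe_injective <| by rw [coe_inf, normal_mul, normal_mul, mul_inf_assoc _ _ _ hMH]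

theorem Subgroup.eq_bot_of_le_of_le_centralizer {M D : Subgroup G} (hZ : center D = ⊥)
    (hMD : M ≤ D) (hDC : D ≤ centralizer M) : M = ⊥ := by
  refine eq_bot_iff.2 fun m hm => ?_
  have hcen : (⟨m, hMD hm⟩ : D) ∈ center D :=
    mem_center_iff.2 fun g => Subtype.ext (mem_centralizer_iff.1 (hDC g.2) m hm).symm
  rw [hZ, mem_bot] at hcen
  exact mem_bot.2 (congrArg Subtype.val hcen)

theorem Subgroup.inf_centralizer_eq_bot {M : Subgroup G} [IsSimpleGroup M]
    (hnc : ¬ ∀ x y : M, x * y = y * x) : M ⊓ centralizer M = ⊥ := by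
  have hcen : center M = ⊥ :=
    (IsSimpleGroup.eq_bot_or_eq_top_of_normal _ inferInstance).resolve_right fun h =>
      hnc fun x y => (mem_center_iff.1 (h ▸ mem_top x) y).symm
  refine eq_bot_iff.2 fun x ⟨hxM, hxC⟩ => ?_
  have hx : (⟨x, hxM⟩ : M) ∈ center M :=
    mem_center_iff.2 fun g => Subtype.ext (mem_centralizer_iff.1 hxC g g.2)
  rw [hcen, mem_bot] at hx
  exact mem_bot.2 (congrArg Subtype.val hx)

theorem exists_isMinimalNormal_le [Finite G] {H : Subgroup G} (hH : H.Normal) (hne : H ≠ ⊥) :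
    ∃ M, IsMinimalNormal M ∧ M ≤ H := by
  obtain ⟨M, hMH, ⟨hMn, hMne⟩, hmin⟩ :=
    exists_minimal_le_of_wellFoundedLT (fun N : Subgroup G => N.Normal ∧ N ≠ ⊥) H ⟨hH, hne⟩
  refine ⟨M, ⟨hMn, hMne, fun N hN hNM => ?_⟩, hMH⟩
  exact or_iff_not_imp_left.2 fun hN' => le_antisymm hNM (hmin ⟨hN, hN'⟩ hNM)

namespace IsMinimalNormal

variable {M N : Subgroup G}

theorem disjoint (hM : IsMinimalNormal M) (hN : IsMinimalNormal N) (hne : M ≠ N) :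
    Disjoint M N := by
  have := hM.1
  have := hN.1
  refine disjoint_iff.2 ((hM.2.2 _ inferInstance inf_le_left).resolve_right fun h => ?_)
  have hMN : M ≤ N := h ▸ inf_le_right
  exact hne ((hN.2.2 M hM.1 hMN).resolve_left hM.2.1)

theorem le_centralizer (hM : IsMinimalNormal M) (hN : IsMinimalNormal N) (hne : M ≠ N) :
    N ≤ centralizer M := fun _ hy =>
  mem_centralizer_iff.2 fun _ hx =>
    commute_of_normal_of_disjoint M N hM.1 hN.1 (hM.disjoint hN hne) _ _ hx hy

theorem map_of_bijective {H : Type*} [Group H] {f : G →* H} (hf : Function.Bijective f)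
    (hM : IsMinimalNormal M) : IsMinimalNormal (M.map f) := by
  refine ⟨hM.1.map f hf.2, ?_, fun N hN hNM => ?_⟩
  · rw [Ne, ← map_bot f]
    exact (map_injective hf.1).ne hM.2.1
  · rw [← map_comap_eq_self_of_surjective hf.2 N] at hNM ⊢
    rw [map_le_map_iff_of_injective hf.1] at hNM
    rcases hM.2.2 _ (hN.comap f) hNM with h | h <;> simp [h]

theorem isSimpleGroup (hSC : SCGroup G) (hM : IsMinimalNormal M)
    (hnc : ¬ ∀ x y : M, x * y = y * x) : IsSimpleGroup M := by
  have := hM.1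
  have : Nontrivial M := (nontrivial_iff_ne_bot M).2 hM.2.1
  -- `SCGroup` speaks of the chief factor `M/1`, i.e. of the image of `M` in `G ⧸ ⊥`.
  let f := QuotientGroup.mk' (⊥ : Subgroup G)
  have hf : Function.Bijective f :=
    ⟨by rw [← MonoidHom.ker_eq_bot_iff, QuotientGroup.ker_mk'], QuotientGroup.mk'_surjective _⟩
  let e := M.equivMapOfInjective f hf.1
  have hnc' : ¬ ∀ x y : M.map f, x * y = y * x := fun h =>
    hnc fun x y => e.injective (by rw [map_mul, map_mul]; exact h _ _)
  have := hSC M ⊥ (bot_lt_iff_ne_bot.2 hM.2.1) (hM.map_of_bijective hf) hnc'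
  exact IsSimpleGroup.isSimpleGroup_of_surjective e.symm.toMonoidHom e.symm.surjective

theorem not_le_centralizer {D : Subgroup G} (hM : IsMinimalNormal M) (hZ : center D = ⊥)
    (hMD : M ≤ D) (hDC : D ≤ M ⊔ centralizer M) : ¬ M ≤ centralizer M := fun h =>
  hM.2.1 (eq_bot_of_le_of_le_centralizer hZ hMD (sup_eq_right.2 h ▸ hDC))

end IsMinimalNormal

theorem sSupIndep_of_isMinimalNormal {S : Set (Subgroup G)}
    (hS : ∀ M ∈ S, IsMinimalNormal M ∧ M ⊓ centralizer M = ⊥) : sSupIndep S := fun M hM =>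
  disjoint_iff.2 <| eq_bot_iff.2 <| (hS M hM).2 ▸ inf_le_inf_left M
    (sSup_le fun N ⟨hN, hNM⟩ => (hS M hM).1.le_centralizer (hS N hN).1 (Ne.symm hNM))

theorem le_sSup_isMinimalNormal [Finite G] {D : Subgroup G} (hZ : center D = ⊥)
    (hD : ∀ M, IsMinimalNormal M → M ≤ D → D ≤ M ⊔ centralizer M) (H : Subgroup G) :
    H.Normal → H ≤ D → H ≤ sSup {M | IsMinimalNormal M ∧ M ≤ D} := by
  induction H using WellFoundedLT.induction with
  | _ H ih =>
  intro hH hHD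
  rcases eq_or_ne H ⊥ with rfl | hne
  · exact bot_le
  obtain ⟨M, hM, hMH⟩ := exists_isMinimalNormal_le hH hne
  have := hM.1
  have hMD := hMH.trans hHD
  have hdec : H = M ⊔ centralizer M ⊓ H := by
    rw [← sup_inf_assoc_of_le_of_normal _ hMH, inf_eq_right.2 (hHD.trans (hD M hM hMD))]
  have hlt : centralizer M ⊓ H < H := inf_le_right.lt_of_ne fun h =>
    hM.not_le_centralizer hZ hMD (hD M hM hMD) (h ▸ hMH |>.trans inf_le_left)
  rw [hdec]
  exact sup_le (le_sSup ⟨hM, hMD⟩) (ih _ hlt inferInstance (inf_le_right.trans hHD))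

end

/-- Let `G` be a finite SC-group with solvable residual `D = G^𝔖` satisfying
`Z(D) = 1`.  If `G/(M·C_G(M))` is solvable for every minimal normal subgroup
`M ≤ D` of `G`, then `D` is a direct product of minimal normal subgroups of
`G`, each a non-abelian simple group. -/
theorem stmt13 {G : Type} [Group G] [Finite G] (hSC : SCGroup G)
    (hZ : Subgroup.center (solvableResidual G) = ⊥)
    (hsolv : ∀ M : Subgroup G, IsMinimalNormal M → M ≤ solvableResidual G →
      ∀ [inst : (M ⊔ Subgroup.centralizer (M : Set G)).Normal],
        IsSolvable (G ⧸ (M ⊔ Subgroup.centralizer (M : Set G)))) :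
    ∃ (ι : Type) (_ : Fintype ι) (Nfam : ι → Subgroup G),
      (∀ i, IsMinimalNormal (Nfam i)) ∧
      (∀ i, IsSimpleGroup (Nfam i)) ∧
      (∀ i, ¬ ∀ x y : (Nfam i), x * y = y * x) ∧
      iSupIndep Nfam ∧ (⨆ i, Nfam i) = solvableResidual G := by
  set D := solvableResidual G
  let S : Set (Subgroup G) := {M | IsMinimalNormal M ∧ M ≤ D}
  have hD : ∀ M, IsMinimalNormal M → M ≤ D → D ≤ M ⊔ centralizer M := fun M hM hMD =>
    have := hM.1
    solvableResidual_le (hsolv M hM hMD)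
  have hnc : ∀ M ∈ S, ¬ ∀ x y : M, x * y = y * x := fun M ⟨hM, hMD⟩ h =>
    hM.not_le_centralizer hZ hMD (hD M hM hMD) (le_centralizer_iff_isMulCommutative.2 ⟨⟨h⟩⟩)
  have hsimple : ∀ M ∈ S, IsSimpleGroup M := fun M hMS => hMS.1.isSimpleGroup hSC (hnc M hMS)
  refine ⟨S, Fintype.ofFinite S, (↑), fun M => M.2.1, fun M => hsimple M M.2,
    fun M => hnc M M.2, ?_, ?_⟩
  · refine (sSupIndep_iff S).1 (sSupIndep_of_isMinimalNormal fun M hMS => ⟨hMS.1, ?_⟩)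
    have := hsimple M hMS
    exact inf_centralizer_eq_bot (hnc M hMS)
  · rw [← sSup_eq_iSup']
    exact le_antisymm (sSup_le fun M hM => hM.2) (le_sSup_isMinimalNormal hZ hD D inferInstance le_rfl)
end

section
/- Let 𝔉 be a formation of finite groups containing all abelian groups of exponent dividing p − 1 for a prime p. Let G = HK be the mutually permutable product of subgroups H, K with H, K ∈ 𝔑_p𝔉, and suppose G ∈ 𝔑_p𝔄 (G has a normal p-subgroup with abelian quotient). Then G ∈ 𝔑_p𝔉. -/
open scoped Pointwise

/-- A class of (finite) groups. -/
abbrev GroupClass : Type 1 := ∀ (H : Type) [Group H], Prop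

/-- `F` is a formation of finite groups: it is closed under isomorphisms,
quotients, and subdirect products. -/
def IsGroupFormation (F : GroupClass) : Prop :=
  (∀ (H : Type) [Group H] [Finite H] (K : Type) [Group K] [Finite K],
      F H → Nonempty (H ≃* K) → F K) ∧
  (∀ (H : Type) [Group H] [Finite H] (N : Subgroup H) [N.Normal],
      F H → F (H ⧸ N)) ∧
  (∀ (H : Type) [Group H] [Finite H] (N₁ N₂ : Subgroup H) [N₁.Normal] [N₂.Normal],
      F (H ⧸ N₁) → F (H ⧸ N₂) → N₁ ⊓ N₂ = ⊥ → F H)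

/-- `X ∈ 𝔑_p𝔉`: `X` has a normal `p`-subgroup with quotient in `F`. -/
def InNpF (p : ℕ) (F : GroupClass) (X : Type) [Group X] : Prop :=
  ∃ P : Subgroup X, P.Normal ∧ IsPGroup p P ∧ ∀ [inst : P.Normal], F (X ⧸ P)

/-- `X ∈ 𝔑_p𝔄`: `X` has a normal `p`-subgroup with abelian quotient. -/
def InNpA (p : ℕ) (X : Type) [Group X] : Prop :=
  ∃ P : Subgroup X, P.Normal ∧ IsPGroup p P ∧
    ∀ [inst : P.Normal], ∀ x y : X ⧸ P, x * y = y * x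

/-- Subgroups `A` and `B` of `G` are mutually permutable. -/
def MutuallyPermutable {G : Type*} [Group G] (A B : Subgroup G) : Prop :=
  (∀ X : Subgroup G, X ≤ B → (A : Set G) * (X : Set G) = (X : Set G) * (A : Set G)) ∧
  (∀ Y : Subgroup G, Y ≤ A → (B : Set G) * (Y : Set G) = (Y : Set G) * (B : Set G))


section AuxLemmas

lemma aux_range (F : GroupClass) (hF : IsGroupFormation F)
    {X : Type} [Group X] [Finite X] {Y : Type} [Group Y] [Finite Y]
    (ψ : X →* Y) (PH : Subgroup X) (hn : PH.Normal)
    (hq : F (X ⧸ PH)) (hle : PH ≤ ψ.ker) : F ↥ψ.range := by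
  haveI := hn
  haveI : (ψ.ker.map (QuotientGroup.mk' PH)).Normal :=
    Subgroup.Normal.map (MonoidHom.normal_ker ψ) _ (QuotientGroup.mk'_surjective PH)
  have h2 : F ((X ⧸ PH) ⧸ ψ.ker.map (QuotientGroup.mk' PH)) := hF.2.1 _ _ hq
  exact hF.1 _ _ h2
    ⟨(QuotientGroup.quotientQuotientEquivQuotient PH ψ.ker hle).trans
      (QuotientGroup.quotientKerEquivRange ψ)⟩

lemma aux_prod (F : GroupClass) (hF : IsGroupFormation F)
    {A : Type} [Group A] [Finite A] {B : Type} [Group B] [Finite B]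
    (hA : F A) (hB : F B) : F (A × B) := by
  have hfst : Function.Surjective (MonoidHom.fst A B) := fun a => ⟨(a, 1), rfl⟩
  have hsnd : Function.Surjective (MonoidHom.snd A B) := fun b => ⟨(1, b), rfl⟩
  refine hF.2.2 _ (MonoidHom.fst A B).ker (MonoidHom.snd A B).ker ?_ ?_ ?_
  · exact hF.1 _ _ hA ⟨(QuotientGroup.quotientKerEquivOfSurjective _ hfst).symm⟩
  · exact hF.1 _ _ hB ⟨(QuotientGroup.quotientKerEquivOfSurjective _ hsnd).symm⟩
  · ext x
    simp only [Subgroup.mem_inf, MonoidHom.mem_ker, Subgroup.mem_bot]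
    constructor
    · rintro ⟨h1, h2⟩; exact Prod.ext h1 h2
    · rintro rfl; exact ⟨rfl, rfl⟩

end AuxLemmas

/-- Let `𝔉` be a formation containing all abelian groups of exponent dividing
`p - 1`.  If `G = HK` is the mutually permutable product of `H, K ∈ 𝔑_p𝔉`
and `G ∈ 𝔑_p𝔄`, then `G ∈ 𝔑_p𝔉`. -/
theorem stmt15 (F : GroupClass) (hF : IsGroupFormation F) {p : ℕ} (hp : p.Prime)
    (hAp : ∀ (A : Type) [Group A] [Finite A],
      (∀ x y : A, x * y = y * x) → (∀ a : A, a ^ (p - 1) = 1) → F A)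
    {G : Type} [Group G] [Finite G]
    (H K : Subgroup G) (hmp : MutuallyPermutable H K)
    (hprod : (H : Set G) * (K : Set G) = Set.univ)
    (hH : InNpF p F H) (hK : InNpF p F K) (hG : InNpA p G) :
    InNpF p F G := by
  classical
  haveI : Fact p.Prime := ⟨hp⟩
  obtain ⟨P, hPn, hPp, hPab'⟩ := hG
  haveI := hPn
  have hPab : ∀ x y : G ⧸ P, x * y = y * x := hPab'
  -- the Sylow p-subgroup of the abelian quotient
  let S : Sylow p (G ⧸ P) := default
  have hSn : (S : Subgroup (G ⧸ P)).Normal :=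
    ⟨fun n hn g => by simpa [hPab g n, mul_assoc] using hn⟩
  -- Q = preimage of S in G
  set Q : Subgroup G := (S : Subgroup (G ⧸ P)).comap (QuotientGroup.mk' P) with hQdef
  have hQn : Q.Normal := Subgroup.Normal.comap hSn _
  have hPQ : P ≤ Q := by
    intro x hx
    show QuotientGroup.mk' P x ∈ (S : Subgroup (G ⧸ P))
    have : QuotientGroup.mk' P x = 1 := (QuotientGroup.eq_one_iff x).mpr hx
    rw [this]; exact one_mem _
  have hQp : IsPGroup p Q := by
    refine S.isPGroup'.comap_of_ker_isPGroup _ ?_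
    rw [QuotientGroup.ker_mk']; exact hPp
  -- every p-element of G ⧸ P lies in S
  have hmemS : ∀ a : G ⧸ P, (∃ k, a ^ p ^ k = 1) → a ∈ (S : Subgroup (G ⧸ P)) := by
    rintro a ⟨k, hk⟩
    have hz : IsPGroup p (Subgroup.zpowers a) := by
      rw [IsPGroup.iff_card]
      obtain ⟨j, -, hj⟩ := (Nat.dvd_prime_pow hp).mp (orderOf_dvd_of_pow_eq_one hk)
      exact ⟨j, by rw [Nat.card_zpowers, hj]⟩
    obtain ⟨T, hT⟩ := hz.exists_le_sylow
    haveI := Sylow.unique_of_normal S hSn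
    have : T = S := Subsingleton.elim T S
    rw [← this]
    exact hT (Subgroup.mem_zpowers a)
  -- G ⧸ Q is abelian
  have hQab : ∀ x y : G ⧸ Q, x * y = y * x := by
    intro x y
    obtain ⟨a, rfl⟩ := QuotientGroup.mk_surjective x
    obtain ⟨b, rfl⟩ := QuotientGroup.mk_surjective y
    show QuotientGroup.mk (a * b) = QuotientGroup.mk (b * a)
    refine (QuotientGroup.eq).mpr (hPQ ?_)
    refine (QuotientGroup.eq (s := P)).mp ?_
    show ((a * b : G) : G ⧸ P) = ((b * a : G) : G ⧸ P)
    simp only [QuotientGroup.mk_mul]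
    exact hPab _ _
  letI : CommGroup (G ⧸ Q) := { (inferInstance : Group (G ⧸ Q)) with mul_comm := hQab }
  haveI := hQn
  -- images of H and K in G ⧸ Q
  set φ : G →* G ⧸ Q := QuotientGroup.mk' Q with hφdef
  -- generic claim for a subgroup in 𝔑_p𝔉
  have key : ∀ (L : Subgroup G), InNpF p F L → F ↥(φ.comp L.subtype).range := by
    rintro L ⟨PL, hPLn, hPLp, hPLF⟩
    haveI := hPLn
    refine aux_range F hF _ PL hPLn hPLF ?_
    intro x hx
    obtain ⟨k, hk⟩ := hPLp ⟨x, hx⟩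
    have hk2 : ((x : G) : G ⧸ P) ^ p ^ k = 1 := by
      have : ((x : ↥L) : G) ^ p ^ k = 1 := by
        have := congrArg (fun z : ↥PL => ((z : ↥L) : G)) hk
        simpa using this
      rw [← QuotientGroup.mk_pow, this, QuotientGroup.mk_one]
    have hmem : (x : G) ∈ Q := hmemS _ ⟨k, hk2⟩
    show φ ((L.subtype) x) = 1
    exact (QuotientGroup.eq_one_iff _).mpr hmem
  have hFH : F ↥(φ.comp H.subtype).range := key H hH
  have hFK : F ↥(φ.comp K.subtype).range := key K hK
  -- multiplication map
  set μ : (↥(φ.comp H.subtype).range × ↥(φ.comp K.subtype).range) →* G ⧸ Q :=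
    MonoidHom.coprod (φ.comp H.subtype).range.subtype (φ.comp K.subtype).range.subtype with hμ
  have hμs : Function.Surjective μ := by
    intro x
    obtain ⟨g, rfl⟩ := QuotientGroup.mk_surjective x
    have hg : g ∈ (H : Set G) * (K : Set G) := by rw [hprod]; trivial
    obtain ⟨h, hh, k, hk, rfl⟩ := hg
    refine ⟨(⟨φ h, ⟨⟨h, hh⟩, rfl⟩⟩, ⟨φ k, ⟨⟨k, hk⟩, rfl⟩⟩), ?_⟩
    show φ h * φ k = _
    rw [← map_mul]
    rfl
  have hFprod : F _ := aux_prod F hF hFH hFK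
  have hfinal : F (G ⧸ Q) := by
    have h2 : F ((↥(φ.comp H.subtype).range × ↥(φ.comp K.subtype).range) ⧸ μ.ker) :=
      hF.2.1 _ _ hFprod
    exact hF.1 _ _ h2 ⟨QuotientGroup.quotientKerEquivOfSurjective μ hμs⟩
  exact ⟨Q, hQn, hQp, fun {_} => hfinal⟩
end

section
/- Let G be a finite group, N a normal subgroup of G contained in the derived subgroup G', with N a minimal normal subgroup of G that is an elementary abelian p-group. If G' is quasinilpotent, then G'/C_{G'}(N) is a p-group, and consequently (G/C_G(N))' is a p-group. -/
/-- `X` is quasinilpotent: every element of `X` induces an inner automorphism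
on every chief factor `U/V` of `X`. -/
def IsQuasinilpotent (X : Type*) [Group X] : Prop :=
  ∀ (U V : Subgroup X) [U.Normal] [V.Normal], V < U →
    IsMinimalNormal (U.map (QuotientGroup.mk' V)) →
    ∀ x : X, ∃ w ∈ U, ∀ u ∈ U, x * u * x⁻¹ * (w * u * w⁻¹)⁻¹ ∈ V

/-! Every element `x` of `G'` has a `p`-power centralizing `N`. This is proved by induction on
`X`-normal subgroups `M ≤ N` of `X = G'`: for `V` maximal among them below `M`, `M/V` is an abelian
chief factor of `X`, so quasinilpotency forces `x` to act trivially on it. By induction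
`y = x ^ p ^ k` centralizes `V`; then `y u y⁻¹ = c u` with `c = ⁅y, u⁆ ∈ V` commuting with `y`,
whence `y ^ p u y⁻ᵖ = c ^ p u = u`. Both conclusions follow, the second because
`(G/C_G(N))'` is the image of `G'`. -/

open Subgroup QuotientGroup
open scoped commutatorElement

section

variable {X : Type*} [Group X]

lemma isMinimalNormal_map_mk'_of_maximal {M V : Subgroup X} [M.Normal] [V.Normal]
    (hVM : V < M) (hmax : ∀ W : Subgroup X, W.Normal → V ≤ W → W < M → W ≤ V) :
    IsMinimalNormal (M.map (mk' V)) := by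
  refine ⟨‹M.Normal›.map _ (mk'_surjective V), ?_, fun K hK hKM => ?_⟩
  · rw [Ne, Subgroup.map_eq_bot_iff, ker_mk']
    exact hVM.not_ge
  set W := K.comap (mk' V)
  have hVW : V ≤ W := by simpa only [ker_mk'] using ker_le_comap (mk' V) K
  have hWM : W ≤ M := by
    calc W ≤ (M.map (mk' V)).comap (mk' V) := comap_mono hKM
      _ = M := by rw [comap_map_eq, ker_mk', sup_eq_left.mpr hVM.le]
  have hKW : K = W.map (mk' V) := (map_comap_eq_self_of_surjective (mk'_surjective V) K).symm
  rcases hWM.lt_or_eq with hlt | heq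
  · left
    rw [hKW, le_antisymm (hmax W (hK.comap _) hVW hlt) hVW, Subgroup.map_eq_bot_iff, ker_mk']
  · right
    rw [hKW, heq]

lemma IsQuasinilpotent.commutatorElement_mem {M V : Subgroup X} [M.Normal] [V.Normal]
    (hq : IsQuasinilpotent X) (hVM : V < M) (hmin : IsMinimalNormal (M.map (mk' V)))
    (hcomm : ∀ u ∈ M, ∀ v ∈ M, Commute u v) (x : X) {u : X} (hu : u ∈ M) : ⁅x, u⁆ ∈ V := by
  obtain ⟨w, hw, hx⟩ := hq M V hVM hmin x
  have hwu : w * u * w⁻¹ = u := by rw [(hcomm w hw u hu).eq, mul_inv_cancel_right]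
  rw [commutatorElement_def]
  simpa only [hwu] using hx u hu

lemma mem_comap_centralizer_map_mk'_iff {M V : Subgroup X} [V.Normal] {x : X} :
    x ∈ (centralizer (M.map (mk' V) : Set (X ⧸ V))).comap (mk' V) ↔ ∀ u ∈ M, ⁅x, u⁆ ∈ V := by
  simp only [mem_comap, mem_centralizer_iff, SetLike.mem_coe, mem_map, forall_exists_index,
    and_imp, forall_apply_eq_imp_iff₂]
  refine forall₂_congr fun u _ => ?_
  rw [← QuotientGroup.eq_one_iff, ← mk'_apply, map_commutatorElement,
    commutatorElement_eq_one_iff_commute, eq_comm]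
  rfl

lemma conj_pow_of_commute_commutatorElement {y u : X} (h : Commute y ⁅y, u⁆) (n : ℕ) :
    y ^ n * u * (y ^ n)⁻¹ = ⁅y, u⁆ ^ n * u := by
  have hconj : y * u * y⁻¹ = ⁅y, u⁆ * u := by rw [commutatorElement_def]; group
  induction n with
  | zero => simp
  | succ n ih =>
    calc y ^ (n + 1) * u * (y ^ (n + 1))⁻¹ = y * (⁅y, u⁆ ^ n * u) * y⁻¹ := by
          rw [← ih]; group
      _ = ⁅y, u⁆ ^ n * (y * u * y⁻¹) := by rw [← mul_assoc y, (h.pow_right n).eq]; group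
      _ = ⁅y, u⁆ ^ (n + 1) * u := by rw [hconj, pow_succ]; group

lemma commute_pow_of_commute_commutatorElement {y u : X} {n : ℕ} (h : Commute y ⁅y, u⁆)
    (hn : ⁅y, u⁆ ^ n = 1) : Commute (y ^ n) u := by
  have := conj_pow_of_commute_commutatorElement h n
  rwa [hn, one_mul, mul_inv_eq_iff_eq_mul] at this

theorem IsQuasinilpotent.exists_pow_mem_centralizer [Finite X] {p : ℕ} (hq : IsQuasinilpotent X)
    (M : Subgroup X) [M.Normal] (hcomm : ∀ u ∈ M, ∀ v ∈ M, Commute u v)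
    (hexp : ∀ u ∈ M, u ^ p = 1) (x : X) : ∃ k, x ^ p ^ k ∈ centralizer (M : Set X) := by
  revert ‹M.Normal› hcomm hexp
  induction M using WellFoundedLT.induction with
  | ind M ih =>
  intro hM hcomm hexp
  rcases eq_or_ne M ⊥ with rfl | hbot
  · exact ⟨0, by simp [mem_centralizer_iff]⟩
  obtain ⟨V, ⟨hVn, hVM⟩, hVmax⟩ :=
    Set.Finite.exists_maximalFor id {W : Subgroup X | W.Normal ∧ W < M} (Set.toFinite _)
      ⟨⊥, inferInstance, bot_lt_iff_ne_bot.mpr hbot⟩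
  have hmin := isMinimalNormal_map_mk'_of_maximal hVM fun W hW hVW hWM => hVmax ⟨hW, hWM⟩ hVW
  obtain ⟨k, hk⟩ := ih V hVM (fun u hu v hv => hcomm u (hVM.le hu) v (hVM.le hv))
    (fun u hu => hexp u (hVM.le hu))
  have hy : ∀ u ∈ M, ⁅x ^ p ^ k, u⁆ ∈ V := mem_comap_centralizer_map_mk'_iff.mp <| pow_mem
    (mem_comap_centralizer_map_mk'_iff.mpr fun u hu => hq.commutatorElement_mem hVM hmin hcomm x hu) _
  refine ⟨k + 1, mem_centralizer_iff.mpr fun u hu => ?_⟩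
  rw [pow_succ, pow_mul]
  exact (commute_pow_of_commute_commutatorElement (mem_centralizer_iff.mp hk _ (hy u hu)).symm
    (hexp _ (hVM.le (hy u hu)))).eq.symm

end

lemma exists_pow_mem_centralizer_of_isQuasinilpotent {G : Type*} [Group G] [Finite G] {p : ℕ}
    {N H : Subgroup G} [N.Normal] (hNH : N ≤ H) (hab : ∀ x y : N, x * y = y * x)
    (hexp : ∀ x : N, x ^ p = 1) (hq : IsQuasinilpotent H) {g : G} (hg : g ∈ H) :
    ∃ k, g ^ p ^ k ∈ centralizer (N : Set G) := by
  obtain ⟨k, hk⟩ := hq.exists_pow_mem_centralizer (N.subgroupOf H)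
    (fun u hu v hv => Subtype.ext (by simpa using congrArg Subtype.val (hab ⟨u, hu⟩ ⟨v, hv⟩)))
    (fun u hu => Subtype.ext (by simpa using congrArg Subtype.val (hexp ⟨u, hu⟩))) ⟨g, hg⟩
  refine ⟨k, mem_centralizer_iff.mpr fun n hn => ?_⟩
  exact congrArg Subtype.val (mem_centralizer_iff.mp hk ⟨n, hNH hn⟩ (mem_subgroupOf.mpr hn))

lemma isPGroup_of_surjective_of_pow_mem_ker {H Q : Type*} [Group H] [Group Q] {p : ℕ}
    (f : H →* Q) (hf : Function.Surjective f) (h : ∀ g, ∃ k, g ^ p ^ k ∈ f.ker) :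
    IsPGroup p Q := by
  intro q
  obtain ⟨g, rfl⟩ := hf q
  obtain ⟨k, hk⟩ := h g
  exact ⟨k, by rwa [← map_pow, ← MonoidHom.mem_ker]⟩

theorem stmt19_general {G : Type} [Group G] [Finite G] {p : ℕ}
    (N : Subgroup G) [N.Normal]
    (hle : N ≤ commutator G)
    (hab : ∀ x y : N, x * y = y * x)
    (hexp : ∀ x : N, x ^ p = 1)
    (hq : IsQuasinilpotent (commutator G)) :
    IsPGroup p
      ((commutator G : Subgroup G) ⧸
        (Subgroup.centralizer (N : Set G)).subgroupOf (commutator G)) ∧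
    IsPGroup p (commutator (G ⧸ Subgroup.centralizer (N : Set G))) := by
  set C := centralizer (N : Set G)
  have key : ∀ g ∈ commutator G, ∃ k, g ^ p ^ k ∈ C := fun g hg =>
    exists_pow_mem_centralizer_of_isQuasinilpotent hle hab hexp hq hg
  constructor
  · refine isPGroup_of_surjective_of_pow_mem_ker (mk' _) (mk'_surjective _) fun g => ?_
    simpa only [ker_mk', mem_subgroupOf, SubgroupClass.coe_pow] using key g g.2
  · have hmap : (commutator G).map (mk' C) = commutator (G ⧸ C) := by
      rw [_root_.commutator_def, _root_.commutator_def, map_commutator,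
        map_top_of_surjective _ (mk'_surjective C)]
    rw [← hmap]
    refine isPGroup_of_surjective_of_pow_mem_ker ((mk' C).subgroupMap _)
      (MonoidHom.subgroupMap_surjective _ _) fun g => ?_
    obtain ⟨k, hk⟩ := key g g.2
    exact ⟨k, Subtype.ext (by simpa [← QuotientGroup.mk_pow, QuotientGroup.eq_one_iff] using hk)⟩

/-- Let `N ≤ G'` be a minimal normal subgroup of a finite group `G` which is
an elementary abelian `p`-group.  If `G'` is quasinilpotent, then
`G'/C_{G'}(N)` is a `p`-group, and consequently `(G/C_G(N))'` is a `p`-group. -/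
theorem stmt19 {G : Type} [Group G] [Finite G] {p : ℕ} (hp : p.Prime)
    (N : Subgroup G) [N.Normal] (hmin : IsMinimalNormal N)
    (hle : N ≤ commutator G)
    (hab : ∀ x y : N, x * y = y * x) (hpgrp : IsPGroup p N)
    (hexp : ∀ x : N, x ^ p = 1)
    (hq : IsQuasinilpotent (commutator G)) :
    IsPGroup p
      ((commutator G : Subgroup G) ⧸
        (Subgroup.centralizer (N : Set G)).subgroupOf (commutator G)) ∧
    IsPGroup p (commutator (G ⧸ Subgroup.centralizer (N : Set G))) :=
  stmt19_general N hle hab hexp hq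
end
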